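/- Let 0 < α < 1 and define, for ξ ∈ ℝ, J_α(ξ) = 4(2π)^{α-1} Γ(1 - 2πiξ) sin(-π²iξ + π/2) Γ(-α + 2πiξ) sin(π²iξ - απ/2). Then there exist positive constants A, B with A(1+|ξ|)^{-α} ≤ |J_α(ξ)| ≤ B(1+|ξ|)^{-α} for all ξ ∈ ℝ. -/

import Mathlib

open Real Complex

noncomputable def Jalpha (α : ℝ) (ξ : ℝ) : ℂ :=
  4 * (2 * π : ℂ) ^ ((α : ℂ) - 1) * Complex.Gamma (1 - 2 * π * Complex.I * ξ) *
    Complex.sin (-(π ^ 2 * Complex.I * ξ) + π / 2) *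
    Complex.Gamma (-α + 2 * π * Complex.I * ξ) *
    Complex.sin (π ^ 2 * Complex.I * ξ - α * π / 2)

/-!
Write `w = -α + 2πiξ` and `t = -2πξ`. The reflection formula `Γ(w)Γ(1-w) = π / sin(πw)`, with
`sin(πw) = 2 sin(πw/2) cos(πw/2)`, turns `J_α(ξ)` into
`‖J_α(ξ)‖ = (2π)^α · cosh(π²ξ) / ‖cos(πw/2)‖ · ‖Γ(1+it)‖ / ‖Γ(1+α+it)‖`, and the exponential growth
of the trigonometric factors cancels: `|cos a| cosh b ≤ ‖cos(a+bi)‖ ≤ cosh b`.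

For the Gamma ratio, Euler's limit `Γ(s) = lim n^s n! / (s(s+1)⋯(s+n))` expresses
`2 log(‖Γ(1+it)‖ / ‖Γ(1+α+it)‖)` as the limit of
`-2α log n + ∑_{j ≤ n} log(((j+1+α)²+t²)/((j+1)²+t²))`.
Up to `O(1/(j+1)²)` each summand is `α` times the telescoping term `log(((j+2)²+t²)/((j+1)²+t²))`,
so the ratio is `(1+t²)^(-α/2)` up to a factor bounded uniformly in `t`. All estimates are
carried out on logarithms.
-/

open Filter Finset Topology

lemma Real.sub_sq_le_log_one_add {x : ℝ} (hx : 0 ≤ x) : x - x ^ 2 ≤ Real.log (1 + x) := by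
  refine le_trans ?_ (Real.le_log_one_add_of_nonneg hx)
  rw [le_div_iff₀ (by positivity)]
  nlinarith [sq_nonneg x, mul_nonneg hx (sq_nonneg x)]

lemma Real.abs_log_sub_log_le_log {a b M : ℝ} (ha : 0 < a) (hb : 0 < b) (hab : a ≤ M * b)
    (hba : b ≤ M * a) : |Real.log a - Real.log b| ≤ Real.log M := by
  have hM : 0 < M := pos_of_mul_pos_left (ha.trans_le hab) hb.le
  have h₁ := Real.log_le_log ha hab
  have h₂ := Real.log_le_log hb hba
  rw [Real.log_mul hM.ne' hb.ne'] at h₁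
  rw [Real.log_mul hM.ne' ha.ne'] at h₂
  rw [abs_le]
  constructor <;> linarith

lemma Real.exp_neg_mul_le_and_le_exp_mul_of_abs_log_sub_log_le {a b K : ℝ} (ha : 0 < a)
    (hb : 0 < b) (h : |Real.log a - Real.log b| ≤ K) :
    Real.exp (-K) * b ≤ a ∧ a ≤ Real.exp K * b := by
  rw [abs_le] at h
  rw [← Real.exp_log ha, ← Real.exp_log hb]
  simp only [← Real.exp_add, Real.exp_le_exp]
  constructor <;> linarith

lemma abs_log_one_add_sub_mul_log_one_add_le {α x y ε : ℝ} (hα0 : 0 ≤ α) (hα1 : α ≤ 1)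
    (hx : 0 ≤ x) (hy : 0 ≤ y) (hx2 : x ^ 2 ≤ ε) (hy2 : y ^ 2 ≤ ε) (hyx : |y - α * x| ≤ ε) :
    |Real.log (1 + y) - α * Real.log (1 + x)| ≤ 2 * ε := by
  have hx_up :=
    mul_le_mul_of_nonneg_left (Real.log_le_sub_one_of_pos (by positivity : 0 < 1 + x)) hα0
  have hx_lo := mul_le_mul_of_nonneg_left (Real.sub_sq_le_log_one_add hx) hα0
  have hy_up := Real.log_le_sub_one_of_pos (by positivity : 0 < 1 + y)
  have hy_lo := Real.sub_sq_le_log_one_add hy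
  have hαx2 : α * x ^ 2 ≤ x ^ 2 := mul_le_of_le_one_left (sq_nonneg x) hα1
  rw [abs_le] at hyx ⊢
  constructor <;> nlinarith

lemma abs_log_sq_add_sq_sub_linear_le {α u t : ℝ} (hα0 : 0 ≤ α) (hα1 : α ≤ 1) (hu : 1 ≤ u) :
    |Real.log ((u + α) ^ 2 + t ^ 2) - Real.log (u ^ 2 + t ^ 2)
      - α * (Real.log ((u + 1) ^ 2 + t ^ 2) - Real.log (u ^ 2 + t ^ 2))| ≤ 18 / u ^ 2 := by
  obtain ⟨Q, hQ_def⟩ : ∃ Q, Q = u ^ 2 + t ^ 2 := ⟨_, rfl⟩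
  have hQu : u ^ 2 ≤ Q := hQ_def ▸ le_add_of_nonneg_right (sq_nonneg t)
  have hQ : 0 < Q := lt_of_lt_of_le (by positivity) hQu
  have hlog_div : ∀ s, 0 ≤ s → Real.log ((u + s) ^ 2 + t ^ 2) - Real.log (u ^ 2 + t ^ 2)
      = Real.log (1 + (2 * s * u + s ^ 2) / Q) := by
    intro s hs
    have : 0 < u + s := by linarith
    rw [← Real.log_div (by positivity) (hQ_def ▸ hQ.ne')]
    congr 1
    field_simp
    rw [hQ_def]
    ring
  have hsq : ∀ y, 0 ≤ y → y ≤ 3 * u → (y / Q) ^ 2 ≤ 9 / Q := by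
    intro y hy0 hy
    rw [div_pow, div_le_div_iff₀ (by positivity) hQ]
    nlinarith [mul_le_mul hy hy hy0 (by positivity)]
  have hdiff : |(2 * α * u + α ^ 2) / Q - α * ((2 * 1 * u + 1 ^ 2) / Q)| ≤ 9 / Q := by
    rw [← mul_div_assoc, ← sub_div, abs_div, abs_of_pos hQ]
    gcongr
    rw [abs_le]
    constructor <;> nlinarith
  rw [hlog_div α hα0, hlog_div 1 zero_le_one]
  calc _ ≤ 2 * (9 / Q) :=
        abs_log_one_add_sub_mul_log_one_add_le hα0 hα1 (by positivity) (by positivity)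
          (hsq _ (by positivity) (by linarith)) (hsq _ (by positivity) (by nlinarith)) hdiff
    _ ≤ 18 / u ^ 2 := by
        rw [← mul_div_assoc]
        gcongr
        norm_num

lemma sum_range_inv_add_one_sq_le (N : ℕ) : ∑ j ∈ range N, ((j + 1 : ℝ) ^ 2)⁻¹ ≤ 2 := by
  have h := sum_Ioo_inv_sq_le (α := ℝ) 0 (N + 1)
  rw [← Ico_add_one_left_eq_Ioo, sum_Ico_eq_sum_range] at h
  simpa [add_comm] using h

lemma abs_sum_log_sq_add_sq_sub_le {α : ℝ} (hα0 : 0 ≤ α) (hα1 : α ≤ 1) (t : ℝ) (N : ℕ) :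
    |∑ j ∈ range N, (Real.log ((j + 1 + α) ^ 2 + t ^ 2) - Real.log ((j + 1) ^ 2 + t ^ 2))
      - α * (Real.log ((N + 1) ^ 2 + t ^ 2) - Real.log (1 + t ^ 2))| ≤ 36 := by
  have htelescope : ∑ j ∈ range N, (Real.log ((j + 1 + 1) ^ 2 + t ^ 2)
      - Real.log ((j + 1) ^ 2 + t ^ 2))
        = Real.log ((N + 1) ^ 2 + t ^ 2) - Real.log (1 + t ^ 2) := by
    convert sum_range_sub (fun j : ℕ ↦ Real.log (((j : ℝ) + 1) ^ 2 + t ^ 2)) N using 2 <;> simp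
  rw [← htelescope, mul_sum, ← sum_sub_distrib]
  calc _ ≤ ∑ j ∈ range N, 18 * ((j + 1 : ℝ) ^ 2)⁻¹ := by
        refine (abs_sum_le_sum_abs _ _).trans (sum_le_sum fun j _ ↦ ?_)
        rw [← div_eq_mul_inv]
        exact abs_log_sq_add_sq_sub_linear_le hα0 hα1 (by simp)
    _ ≤ 18 * 2 := by
        rw [← mul_sum]
        gcongr
        exact sum_range_inv_add_one_sq_le N
    _ = 36 := by norm_num

lemma Complex.log_norm_GammaSeq {σ : ℝ} (hσ : 0 < σ) (t : ℝ) {n : ℕ} (hn : n ≠ 0) :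
    Real.log ‖GammaSeq (σ + t * I) n‖ = σ * Real.log n + Real.log n.factorial
      - (∑ j ∈ range (n + 1), Real.log ((j + σ) ^ 2 + t ^ 2)) / 2 := by
  have hnorm : ∀ j : ℕ, ‖(σ + t * I : ℂ) + j‖ = √((j + σ) ^ 2 + t ^ 2) := by
    intro j
    rw [Complex.norm_def, normSq_apply]
    congr 1
    simp
    ring
  have hpos : ∀ j : ℕ, 0 < √((j + σ) ^ 2 + t ^ 2) := fun j ↦ by positivity
  have hn_pos : (0 : ℝ) < n := Nat.cast_pos.2 (Nat.pos_of_ne_zero hn)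
  have hre : (σ + t * I : ℂ).re = σ := by simp
  rw [Complex.GammaSeq, norm_div, norm_mul, norm_prod, ← ofReal_natCast n,
    norm_cpow_eq_rpow_re_of_pos hn_pos, hre]
  simp only [hnorm, Complex.norm_natCast]
  have hprod : 0 < ∏ j ∈ range (n + 1), √((j + σ) ^ 2 + t ^ 2) := prod_pos fun j _ ↦ hpos j
  rw [Real.log_div (by positivity) hprod.ne', Real.log_mul (by positivity) (by positivity),
    Real.log_rpow hn_pos, Real.log_prod fun j _ ↦ (hpos j).ne', sum_div]
  simp only [Real.log_sqrt (sq_nonneg _ |>.trans (le_add_of_nonneg_right (sq_nonneg t)))]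

theorem Complex.abs_log_norm_Gamma_ratio_le {α : ℝ} (hα0 : 0 ≤ α) (hα1 : α ≤ 1) (t : ℝ) :
    |2 * (Real.log ‖Gamma (1 + t * I)‖ - Real.log ‖Gamma (1 + α + t * I)‖)
      + α * Real.log (1 + t ^ 2)| ≤ 36 + Real.log 10 := by
  set F : ℕ → ℝ := fun n ↦ 2 * (Real.log ‖GammaSeq (1 + t * I) n‖
    - Real.log ‖GammaSeq (1 + α + t * I) n‖) + α * Real.log (1 + t ^ 2)
  have hF_lim : Tendsto F atTop (𝓝 (2 * (Real.log ‖Gamma (1 + t * I)‖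
      - Real.log ‖Gamma (1 + α + t * I)‖) + α * Real.log (1 + t ^ 2))) := by
    have hlim : ∀ s : ℂ, 0 < s.re → Tendsto (fun n ↦ Real.log ‖GammaSeq s n‖) atTop
        (𝓝 (Real.log ‖Gamma s‖)) := fun s hs ↦
      (GammaSeq_tendsto_Gamma s).norm.log (norm_ne_zero_iff.2 (Gamma_ne_zero_of_re_pos hs))
    exact (((hlim _ (by simp)).sub (hlim _ (by simp; linarith))).const_mul 2).add_const _
  refine le_of_tendsto hF_lim.abs ?_
  filter_upwards [eventually_ge_atTop (⌈|t|⌉₊ + 1)] with n hn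
  have hn1 : (1 : ℝ) ≤ n := by exact_mod_cast (Nat.le_add_left 1 _).trans hn
  have hnt : |t| ≤ n := (Nat.le_ceil _).trans (by exact_mod_cast (Nat.le_add_right _ _).trans hn)
  have h1 := log_norm_GammaSeq one_pos t (n := n) (by omega)
  have h2 := log_norm_GammaSeq (σ := 1 + α) (by linarith) t (n := n) (by omega)
  push_cast at h1 h2
  simp only [← add_assoc] at h2
  have hsum := abs_sum_log_sq_add_sq_sub_le hα0 hα1 t (n + 1)
  -- once `n ≥ |t|`, the factor `((n+2)² + t²) / n²` left by the telescoping lies in `[1, 10]`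
  have hlog_n : 0 ≤ Real.log (((n + 1 : ℕ) + 1) ^ 2 + t ^ 2) - 2 * Real.log n
      ∧ Real.log (((n + 1 : ℕ) + 1) ^ 2 + t ^ 2) - 2 * Real.log n ≤ Real.log 10 := by
    have ht2 : t ^ 2 ≤ n ^ 2 := by simpa using pow_le_pow_left₀ (abs_nonneg t) hnt 2
    rw [show 2 * Real.log n = Real.log (n ^ 2) by simp [Real.log_pow], sub_nonneg,
      sub_le_iff_le_add, ← Real.log_mul (by norm_num) (by positivity)]
    push_cast
    constructor <;> apply Real.log_le_log (by positivity) <;> nlinarith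
  have hF : F n = (∑ j ∈ range (n + 1), (Real.log ((j + 1 + α) ^ 2 + t ^ 2)
      - Real.log ((j + 1) ^ 2 + t ^ 2)) - α * (Real.log (((n + 1 : ℕ) + 1) ^ 2 + t ^ 2)
        - Real.log (1 + t ^ 2)))
      + α * (Real.log (((n + 1 : ℕ) + 1) ^ 2 + t ^ 2) - 2 * Real.log n) := by
    simp only [F, h1, h2, sum_sub_distrib]
    ring
  have hα_log_n := mul_le_of_le_one_left hlog_n.1 hα1
  have hα_log_n₀ := mul_nonneg hα0 hlog_n.1
  rw [hF, abs_le]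
  rw [abs_le] at hsum
  constructor <;> linarith

lemma Complex.abs_cos_mul_cosh_le_norm_cos_add_mul_I (a b : ℝ) :
    |Real.cos a| * Real.cosh b ≤ ‖cos (a + b * I)‖ ∧ ‖cos (a + b * I)‖ ≤ Real.cosh b := by
  have hsq : ‖cos (a + b * I)‖ ^ 2
      = (Real.cos a * Real.cosh b) ^ 2 + (Real.sin a * Real.sinh b) ^ 2 := by
    have : cos (a + b * I) = ↑(Real.cos a * Real.cosh b) + ↑(-(Real.sin a * Real.sinh b)) * I := by
      rw [cos_add_mul_I]
      push_cast
      ring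
    rw [this, Complex.sq_norm, normSq_add_mul_I, neg_sq]
  have hcosh := Real.cosh_sq b
  have htrig := Real.sin_sq_add_cos_sq a
  constructor
  · rw [← pow_le_pow_iff_left₀ (by positivity) (norm_nonneg _) two_ne_zero, hsq, mul_pow, sq_abs]
    nlinarith [sq_nonneg (Real.sin a * Real.sinh b)]
  · rw [← pow_le_pow_iff_left₀ (norm_nonneg _) (Real.cosh_pos b).le two_ne_zero, hsq]
    nlinarith [mul_nonneg (sq_nonneg (Real.sin a)) (sq_nonneg (Real.sinh b))]

lemma Complex.abs_log_cosh_sub_log_norm_cos_add_mul_I_le {a : ℝ} (ha : 0 < Real.cos a) (b : ℝ) :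
    0 < ‖cos (a + b * I)‖
      ∧ |Real.log (Real.cosh b) - Real.log ‖cos (a + b * I)‖| ≤ Real.log (Real.cos a)⁻¹ := by
  obtain ⟨h_lo, h_hi⟩ := abs_cos_mul_cosh_le_norm_cos_add_mul_I a b
  rw [abs_of_pos ha] at h_lo
  have hcosh := Real.cosh_pos b
  have hC : 0 < ‖cos (a + b * I)‖ := (mul_pos ha hcosh).trans_le h_lo
  have ha_inv : 1 ≤ (Real.cos a)⁻¹ := one_le_inv₀ ha |>.2 (Real.cos_le_one _)
  refine ⟨hC, Real.abs_log_sub_log_le_log hcosh hC ?_ ?_⟩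
  · rwa [inv_mul_eq_div, le_div_iff₀ ha, mul_comm]
  · nlinarith

lemma Complex.Gamma_mul_sin_mul_cos_mul_Gamma_one_sub {s : ℂ} (hs : ∀ n : ℤ, s ≠ n) :
    Gamma s * sin (π * s / 2) * (2 * cos (π * s / 2) * Gamma (1 - s)) = π := by
  have hsin : sin (π * s) ≠ 0 := by
    rw [Complex.sin_ne_zero_iff]
    intro k hk
    apply hs k
    apply mul_left_cancel₀ (ofReal_ne_zero.2 Real.pi_ne_zero)
    rw [hk, mul_comm]
  calc Gamma s * sin (π * s / 2) * (2 * cos (π * s / 2) * Gamma (1 - s))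
      = Gamma s * Gamma (1 - s) * sin (2 * (π * s / 2)) := by rw [Complex.sin_two_mul]; ring
    _ = π := by rw [Gamma_mul_Gamma_one_sub, mul_div_cancel₀ _ two_ne_zero, div_mul_cancel₀ _ hsin]

lemma norm_Jalpha {α : ℝ} (hα : ∀ n : ℤ, α ≠ n) (ξ : ℝ) :
    ‖Jalpha α ξ‖ = (2 * π) ^ α
      * (Real.cosh (π ^ 2 * ξ) / ‖cos (↑(-(α * π / 2)) + ↑(π ^ 2 * ξ) * I)‖)
      * (‖Gamma (1 + ↑(-(2 * π * ξ)) * I)‖ / ‖Gamma (1 + α + ↑(-(2 * π * ξ)) * I)‖) := by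
  set w : ℂ := -α + 2 * π * I * ξ with hw
  have hw_int : ∀ n : ℤ, w ≠ n := by
    intro n h
    apply hα (-n)
    have := congrArg re h
    simp [hw] at this
    push_cast
    linarith
  have hrefl := congrArg norm (Gamma_mul_sin_mul_cos_mul_Gamma_one_sub hw_int)
  have hcos : π * w / 2 = ↑(-(α * π / 2)) + ↑(π ^ 2 * ξ) * I := by rw [hw]; push_cast; ring
  have hsin : π ^ 2 * I * ξ - α * π / 2 = π * w / 2 := by rw [hw]; ring
  have hGamma₁ : 1 - 2 * π * I * ξ = 1 + ↑(-(2 * π * ξ)) * I := by push_cast; ring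
  have hGamma₂ : 1 - w = 1 + α + ↑(-(2 * π * ξ)) * I := by rw [hw]; push_cast; ring
  have hcosh : ‖Complex.sin (-(π ^ 2 * I * ξ) + π / 2)‖ = Real.cosh (π ^ 2 * ξ) := by
    rw [show -(π ^ 2 * I * ξ) + π / 2 = π / 2 - ↑(π ^ 2 * ξ) * I by push_cast; ring,
      Complex.sin_pi_div_two_sub, Complex.cos_mul_I, ← ofReal_cosh, Complex.norm_real,
      Real.norm_of_nonneg (Real.cosh_pos _).le]
  have hpow : ‖(2 * π : ℂ) ^ ((α : ℂ) - 1)‖ = (2 * π) ^ (α - 1) := by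
    rw [← ofReal_ofNat, ← ofReal_mul, norm_cpow_eq_rpow_re_of_pos (by positivity)]
    simp
  simp only [norm_mul, Complex.norm_real, Complex.norm_ofNat, Real.norm_eq_abs,
    abs_of_pos Real.pi_pos, hcos, hGamma₂] at hrefl
  rw [Jalpha, norm_mul, norm_mul, norm_mul, norm_mul, norm_mul, hsin, hpow, hcosh, hGamma₁]
  have hcos_ne : ‖Complex.cos (↑(-(α * π / 2)) + ↑(π ^ 2 * ξ) * I)‖ ≠ 0 := by
    rintro h; rw [h] at hrefl; simp [Real.pi_ne_zero.symm] at hrefl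
  have hGamma_ne : ‖Gamma (1 + α + ↑(-(2 * π * ξ)) * I)‖ ≠ 0 := by
    rintro h; rw [h] at hrefl; simp [Real.pi_ne_zero.symm] at hrefl
  rw [← hw, hcos, Complex.norm_ofNat, Real.rpow_sub_one (by positivity)]
  generalize ‖Gamma w‖ = Gw, ‖Complex.sin (↑(-(α * π / 2)) + ↑(π ^ 2 * ξ) * I)‖ = S,
    ‖Complex.cos (↑(-(α * π / 2)) + ↑(π ^ 2 * ξ) * I)‖ = C,
    ‖Gamma (1 + α + ↑(-(2 * π * ξ)) * I)‖ = G₂ at hrefl hcos_ne hGamma_ne ⊢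
  field_simp
  linear_combination 2 * ‖Gamma (1 + ↑(-(2 * π * ξ)) * I)‖ * hrefl

lemma abs_log_one_add_sq_sub_two_mul_log_le {c : ℝ} (hc : 1 ≤ c) (x : ℝ) :
    |Real.log (1 + (c * x) ^ 2) - 2 * Real.log (1 + |x|)| ≤ Real.log (2 * c ^ 2) := by
  rw [← Real.log_rpow (by positivity), Real.rpow_two]
  have hx2 : x ^ 2 ≤ (c * x) ^ 2 := by
    rw [mul_pow]; exact le_mul_of_one_le_left (sq_nonneg x) (one_le_pow₀ hc)
  apply Real.abs_log_sub_log_le_log (by positivity) (by positivity)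
  · nlinarith [abs_nonneg x, sq_abs x, one_le_pow₀ (n := 2) hc]
  · nlinarith [abs_nonneg x, sq_abs x, one_le_pow₀ (n := 2) hc, sq_nonneg (|x| - 1)]

theorem exists_abs_log_norm_Jalpha_add_le {α : ℝ} (hα0 : 0 < α) (hα1 : α < 1) :
    ∃ K, ∀ ξ : ℝ, 0 < ‖Jalpha α ξ‖ ∧ |Real.log ‖Jalpha α ξ‖ + α * Real.log (1 + |ξ|)| ≤ K := by
  have hα : ∀ n : ℤ, α ≠ n := by
    rintro n rfl
    have h₀ : 0 < n := by exact_mod_cast hα0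
    have h₁ : n < 1 := by exact_mod_cast hα1
    omega
  have hc : 0 < Real.cos (α * π / 2) :=
    Real.cos_pos_of_mem_Ioo ⟨by nlinarith [Real.pi_pos], by nlinarith [Real.pi_pos]⟩
  have h2π : 1 ≤ 2 * π := by linarith [Real.pi_gt_three]
  refine ⟨α * Real.log (2 * π) + Real.log (Real.cos (α * π / 2))⁻¹ + (36 + Real.log 10) / 2
    + α * Real.log (2 * (2 * π) ^ 2) / 2, fun ξ ↦ ?_⟩
  have hpoly := abs_log_one_add_sq_sub_two_mul_log_le h2π ξ
  rw [← neg_sq] at hpoly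
  set t := -(2 * π * ξ)
  set C := ‖cos (↑(-(α * π / 2)) + ↑(π ^ 2 * ξ) * I)‖
  set G₁ := ‖Gamma (1 + t * I)‖
  set G₂ := ‖Gamma (1 + α + t * I)‖
  obtain ⟨hC, hcos_ratio⟩ := Complex.abs_log_cosh_sub_log_norm_cos_add_mul_I_le
    (a := -(α * π / 2)) (by rwa [Real.cos_neg]) (π ^ 2 * ξ)
  rw [Real.cos_neg] at hcos_ratio
  have hcosh := Real.cosh_pos (π ^ 2 * ξ)
  have hG₁ : 0 < G₁ := norm_pos_iff.2 (Gamma_ne_zero_of_re_pos (by simp))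
  have hG₂ : 0 < G₂ := norm_pos_iff.2 (Gamma_ne_zero_of_re_pos (by simp; linarith))
  have hGamma := Complex.abs_log_norm_Gamma_ratio_le hα0.le hα1.le t
  have hlog : Real.log ‖Jalpha α ξ‖ = α * Real.log (2 * π)
      + (Real.log (Real.cosh (π ^ 2 * ξ)) - Real.log C) + (Real.log G₁ - Real.log G₂) := by
    rw [norm_Jalpha hα ξ, Real.log_mul (by positivity) (by positivity),
      Real.log_mul (by positivity) (by positivity), Real.log_rpow (by positivity),
      Real.log_div hcosh.ne' hC.ne', Real.log_div hG₁.ne' hG₂.ne']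
  refine ⟨by rw [norm_Jalpha hα ξ]; positivity, ?_⟩
  have h2π_log : 0 ≤ α * Real.log (2 * π) := mul_nonneg hα0.le (Real.log_nonneg h2π)
  rw [abs_le] at hcos_ratio hGamma hpoly ⊢
  have hpoly₁ := mul_le_mul_of_nonneg_left hpoly.1 hα0.le
  have hpoly₂ := mul_le_mul_of_nonneg_left hpoly.2 hα0.le
  rw [hlog]
  constructor <;> linarith

theorem stmt16 (α : ℝ) (hα0 : 0 < α) (hα1 : α < 1) :
    ∃ A B : ℝ, 0 < A ∧ 0 < B ∧ ∀ ξ : ℝ,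
      A * (1 + |ξ|) ^ (-α) ≤ ‖Jalpha α ξ‖ ∧
      ‖Jalpha α ξ‖ ≤ B * (1 + |ξ|) ^ (-α) := by
  obtain ⟨K, hK⟩ := exists_abs_log_norm_Jalpha_add_le hα0 hα1
  refine ⟨Real.exp (-K), Real.exp K, Real.exp_pos _, Real.exp_pos _, fun ξ ↦ ?_⟩
  obtain ⟨hJ, hlog⟩ := hK ξ
  apply Real.exp_neg_mul_le_and_le_exp_mul_of_abs_log_sub_log_le hJ (by positivity)
  rwa [Real.log_rpow (by positivity), neg_mul, sub_neg_eq_add]
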